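/- In an accepting run of the 2AFW A_{⟨U⟩φ'} on a trace π from position i, there exists a node v with configuration (φ', j) for some position j, reachable from the root via a path; in particular, no accepting run of A_{⟨U⟩φ'} consists solely of diamond-state configurations along every branch. -/

import Mathlib

/-- Propositional formulas over atomic propositions `AP`. -/
inductive PropF (AP : Type) where
  | atom : AP → PropF AP
  | neg : PropF AP → PropF AP
  | conj : PropF AP → PropF AP → PropF AP
  | disj : PropF AP → PropF AP → PropF AP

/-- Truth of a propositional formula in a propositional interpretation. -/
def PropF.holds {AP : Type} (s : Set AP) : PropF AP → Prop
  | .atom p => p ∈ s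
  | .neg ζ => ¬ ζ.holds s
  | .conj a b => a.holds s ∧ b.holds s
  | .disj a b => a.holds s ∨ b.holds s

mutual
/-- ALDLf formulas. -/
inductive ALDLf (AP : Type) where
  | atom : AP → ALDLf AP
  | neg : ALDLf AP → ALDLf AP
  | conj : ALDLf AP → ALDLf AP → ALDLf AP
  | disj : ALDLf AP → ALDLf AP → ALDLf AP
  | dia : PathAut AP → ALDLf AP → ALDLf AP
  | box : PathAut AP → ALDLf AP → ALDLf AP

/-- Alphabet letters of a path automaton: forward propositional labels ζ,
backward (past) labels ζ⁻, and tests ψ?. -/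
inductive PALabel (AP : Type) where
  | fwd : PropF AP → PALabel AP
  | bwd : PropF AP → PALabel AP
  | test : ALDLf AP → PALabel AP

/-- A path automaton `(R, T, Δ, r, G)`: states, alphabet, transitions,
start state, accepting states.  States are natural numbers. -/
inductive PathAut (AP : Type) where
  | mk : List ℕ → List (PALabel AP) → List (ℕ × PALabel AP × ℕ) → ℕ → List ℕ → PathAut AP
end

/-- Satisfaction of a propositional formula at position `k` of a trace. -/
def propAt {AP : Type} (π : List (Set AP)) (k : ℕ) (ζ : PropF AP) : Prop :=
  ∃ s, π[k]? = some s ∧ ζ.holds s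

/-- One step of a path automaton over a trace, with tests evaluated by the
oracle `T`. -/
def AutStep {AP : Type} (T : ℕ → ALDLf AP → Prop) (π : List (Set AP))
    (Δ : List (ℕ × PALabel AP × ℕ)) (c c' : ℕ × ℕ) : Prop :=
  (c'.2 = c.2 + 1 ∧ ∃ ζ, (c.1, PALabel.fwd ζ, c'.1) ∈ Δ ∧ propAt π c.2 ζ) ∨
  (c'.2 + 1 = c.2 ∧ ∃ ζ, (c.1, PALabel.bwd ζ, c'.1) ∈ Δ ∧ propAt π c.2 ζ) ∨
  (c'.2 = c.2 ∧ ∃ ψ, (c.1, PALabel.test ψ, c'.1) ∈ Δ ∧ T c.2 ψ)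

/-- `π,i,j ⊨ U`, with tests evaluated by the oracle `T`: either `i = j` and the
start state is accepting, or there is a finite sequence of state–position pairs
following the transitions of `U` from `(r,i)` to an accepting state at `j`. -/
def AutRelO {AP : Type} (T : ℕ → ALDLf AP → Prop) (π : List (Set AP)) :
    PathAut AP → ℕ → ℕ → Prop
  | .mk _ _ Δ r G, i, j =>
    (i = j ∧ r ∈ G) ∨
    ∃ seq : List (ℕ × ℕ), seq.head? = some (r, i) ∧
      (∃ l, seq.getLast? = some l ∧ l.1 ∈ G ∧ l.2 = j) ∧
      (∀ e ∈ seq, e.2 < π.length) ∧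
      (∀ m, ∀ h : m + 1 < seq.length,
        AutStep T π Δ (seq.get ⟨m, by omega⟩) (seq.get ⟨m + 1, h⟩))

/-- Fuelled satisfaction relation for ALDLf.  The fuel strictly exceeds the
structural size (`sizeOf`) of every formula it is ever applied to, so
`satF (sizeOf φ) π i φ` agrees with the intended (well-founded) semantics. -/
def satF {AP : Type} : ℕ → List (Set AP) → ℕ → ALDLf AP → Prop
  | 0, _, _, _ => False
  | _ + 1, π, i, .atom p => ∃ s, π[i]? = some s ∧ p ∈ s
  | n + 1, π, i, .neg φ => ¬ satF n π i φ
  | n + 1, π, i, .conj a b => satF n π i a ∧ satF n π i b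
  | n + 1, π, i, .disj a b => satF n π i a ∨ satF n π i b
  | n + 1, π, i, .dia U φ =>
      ∃ j, j < π.length ∧ AutRelO (fun k ψ => satF n π k ψ) π U i j ∧ satF n π j φ
  | n + 1, π, i, .box U φ =>
      ∀ j, j < π.length → AutRelO (fun k ψ => satF n π k ψ) π U i j → satF n π j φ

/-- `π,i ⊨ φ` for ALDLf. -/
def ALDLf.Sat {AP : Type} (π : List (Set AP)) (i : ℕ) (φ : ALDLf AP) : Prop :=
  satF (sizeOf φ) π i φ

/-- `π,i,j ⊨ U` with tests evaluated by genuine ALDLf satisfaction. -/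
def AutRel {AP : Type} (π : List (Set AP)) (U : PathAut AP) (i j : ℕ) : Prop :=
  AutRelO (fun k ψ => ALDLf.Sat π k ψ) π U i j

/-- The size `|φ|` of an ALDLf formula, as in the paper. -/
def ALDLf.size {AP : Type} : ALDLf AP → ℕ
  | .atom _ => 1
  | .neg φ => 3 + φ.size
  | .conj a b => 3 + a.size + b.size
  | .disj a b => 3 + a.size + b.size
  | .dia (.mk R _ _ _ _) φ => 4 + R.length + φ.size
  | .box (.mk R _ _ _ _) φ => 4 + R.length + φ.size
mutual
/-- Negation normal form of an ALDLf formula (negations pushed to atoms,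
including inside tests of path automata). -/
def nnf {AP : Type} : ALDLf AP → ALDLf AP
  | .atom p => .atom p
  | .neg φ => nnfNeg φ
  | .conj a b => .conj (nnf a) (nnf b)
  | .disj a b => .disj (nnf a) (nnf b)
  | .dia U φ => .dia (nnfAut U) (nnf φ)
  | .box U φ => .box (nnfAut U) (nnf φ)

/-- Negation normal form of the negation of an ALDLf formula. -/
def nnfNeg {AP : Type} : ALDLf AP → ALDLf AP
  | .atom p => .neg (.atom p)
  | .neg φ => nnf φ
  | .conj a b => .disj (nnfNeg a) (nnfNeg b)
  | .disj a b => .conj (nnfNeg a) (nnfNeg b)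
  | .dia U φ => .box (nnfAut U) (nnfNeg φ)
  | .box U φ => .dia (nnfAut U) (nnfNeg φ)

def nnfLabel {AP : Type} : PALabel AP → PALabel AP
  | .fwd ζ => .fwd ζ
  | .bwd ζ => .bwd ζ
  | .test ψ => .test (nnf ψ)

def nnfLabels {AP : Type} : List (PALabel AP) → List (PALabel AP)
  | [] => []
  | l :: ls => nnfLabel l :: nnfLabels ls

def nnfTrans {AP : Type} : List (ℕ × PALabel AP × ℕ) → List (ℕ × PALabel AP × ℕ)
  | [] => []
  | (a, l, b) :: ls => (a, nnfLabel l, b) :: nnfTrans ls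

def nnfAut {AP : Type} : PathAut AP → PathAut AP
  | .mk R T Δ r G => .mk R (nnfLabels T) (nnfTrans Δ) r G
end
/-- Positive Boolean formulas over `X` (with `true` and `false`, no negation). -/
inductive PBF (X : Type) where
  | tru : PBF X
  | fls : PBF X
  | var : X → PBF X
  | conj : PBF X → PBF X → PBF X
  | disj : PBF X → PBF X → PBF X

/-- A set `M ⊆ X` satisfies a positive Boolean formula. -/
def PBF.satBy {X : Type} (M : Set X) : PBF X → Prop
  | .tru => True
  | .fls => False
  | .var x => x ∈ M
  | .conj a b => a.satBy M ∧ b.satBy M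
  | .disj a b => a.satBy M ∨ b.satBy M

/-- Directions of a two-way automaton: −1, 0, 1. -/
inductive Dir where
  | back : Dir
  | stay : Dir
  | fwd : Dir
deriving DecidableEq

/-- Applying a direction to a position (undefined when moving left of 0). -/
def Dir.apply : Dir → ℕ → Option ℕ
  | .back, 0 => none
  | .back, i + 1 => some i
  | .stay, i => some i
  | .fwd, i => some (i + 1)

/-- A two-way alternating automaton on finite words `(Q, Σ, δ, q₀, F)`. -/
structure TAFW (Q A : Type) where
  delta : Q → A → PBF (Q × Dir)
  start : Q
  acc : Set Q

/-- Configurations of a 2AFW: a state with a read position, or `Accept`. -/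
inductive Config (Q : Type) where
  | conf : Q → ℕ → Config Q
  | accept : Config Q

variable {Q A : Type}

/-- `ρ` (a partial labelling of the tree of finite index sequences) is a run of
the 2AFW `M` on `w` from position `k`. -/
structure IsRun (M : TAFW Q A) (w : List A) (k : ℕ)
    (ρ : List ℕ → Option (Config Q)) : Prop where
  root : ρ [] = some (.conf M.start k)
  tree : ∀ x n, (ρ (x ++ [n])).isSome → (ρ x).isSome
  accept_leaf : ∀ x, ρ x = some .accept → ∀ n, ρ (x ++ [n]) = none
  node : ∀ x q i, ρ x = some (.conf q i) → ∃ a, w[i]? = some a ∧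
    ((M.delta q a = .fls ∧ ∀ n, ρ (x ++ [n]) = none) ∨
     (M.delta q a = .tru ∧ (∃ n, ρ (x ++ [n]) = some .accept) ∧
        ∀ n c, ρ (x ++ [n]) = some c → c = .accept) ∨
     (M.delta q a ≠ .tru ∧ M.delta q a ≠ .fls ∧
       ∃ S : Set (Q × Dir), (M.delta q a).satBy S ∧
         (∀ τ ∈ S, ∃ n j, τ.2.apply i = some j ∧ ρ (x ++ [n]) = some (.conf τ.1 j)) ∧
         (∀ n c, ρ (x ++ [n]) = some c →
            ∃ τ ∈ S, ∃ j, τ.2.apply i = some j ∧ c = .conf τ.1 j)))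

/-- A leaf of the run tree. -/
def IsLeaf (ρ : List ℕ → Option (Config Q)) (x : List ℕ) : Prop :=
  (ρ x).isSome ∧ ∀ n, ρ (x ++ [n]) = none

/-- An infinite branch of the run tree, given by successive child indices. -/
def InfBranch (ρ : List ℕ → Option (Config Q)) (b : ℕ → ℕ) : Prop :=
  ∀ n, (ρ ((List.range n).map b)).isSome

/-- A run is accepting when every finite branch ends in `Accept` and every
infinite branch has some accepting state occurring infinitely often. -/
def AcceptingRun (M : TAFW Q A) (w : List A) (k : ℕ)
    (ρ : List ℕ → Option (Config Q)) : Prop :=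
  IsRun M w k ρ ∧
  (∀ x, IsLeaf ρ x → ρ x = some .accept) ∧
  (∀ b, InfBranch ρ b →
    ∃ f ∈ M.acc, ∀ N, ∃ n ≥ N, ∃ i, ρ ((List.range n).map b) = some (.conf f i))

/-- The 2AFW `M` accepts `w` from position `k`. -/
def TAFW.Accepts (M : TAFW Q A) (w : List A) (k : ℕ) : Prop :=
  ∃ ρ, AcceptingRun M w k ρ
open scoped Classical

/-- Replace the start state of a path automaton. -/
def PathAut.withStart {AP : Type} : PathAut AP → ℕ → PathAut AP
  | .mk R T Δ _ G, r' => .mk R T Δ r' G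

/-- Transition formula of the 2AFW for a diamond formula `⟨U⟩φ'` with current
path-automaton state `r`, on reading the letter `s` (rule 5). -/
noncomputable def diaTrans {AP : Type} (s : Set AP) (R : List ℕ)
    (T : List (PALabel AP)) (Δ : List (ℕ × PALabel AP × ℕ)) (G : List ℕ)
    (φ' : ALDLf AP) (r : ℕ) : PBF (ALDLf AP × Dir) :=
  let arms : List (PBF (ALDLf AP × Dir)) := Δ.filterMap (fun t =>
    if t.1 = r then
      match t.2.1 with
      | .fwd ζ => if ζ.holds s then
          some (.var (ALDLf.dia (.mk R T Δ t.2.2 G) φ', Dir.fwd)) else none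
      | .bwd ζ => if ζ.holds s then
          some (.var (ALDLf.dia (.mk R T Δ t.2.2 G) φ', Dir.back)) else none
      | .test ψ => some (.conj (.var (ψ, Dir.stay))
          (.var (ALDLf.dia (.mk R T Δ t.2.2 G) φ', Dir.stay)))
    else none)
  let base := arms.foldr PBF.disj PBF.fls
  if r ∈ G then PBF.disj (PBF.var (φ', Dir.stay)) base else base

/-- Transition formula of the 2AFW for a box formula `[U]φ'` (rule 6, dual). -/
noncomputable def boxTrans {AP : Type} (s : Set AP) (R : List ℕ)
    (T : List (PALabel AP)) (Δ : List (ℕ × PALabel AP × ℕ)) (G : List ℕ)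
    (φ' : ALDLf AP) (r : ℕ) : PBF (ALDLf AP × Dir) :=
  let arms : List (PBF (ALDLf AP × Dir)) := Δ.filterMap (fun t =>
    if t.1 = r then
      match t.2.1 with
      | .fwd ζ => if ζ.holds s then
          some (.var (ALDLf.box (.mk R T Δ t.2.2 G) φ', Dir.fwd)) else none
      | .bwd ζ => if ζ.holds s then
          some (.var (ALDLf.box (.mk R T Δ t.2.2 G) φ', Dir.back)) else none
      | .test ψ => some (.disj (.var (nnfNeg ψ, Dir.stay))
          (.var (ALDLf.box (.mk R T Δ t.2.2 G) φ', Dir.stay)))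
    else none)
  let base := arms.foldr PBF.conj PBF.tru
  if r ∈ G then PBF.conj (PBF.var (φ', Dir.stay)) base else base

/-- The transition function of the 2AFW `A_φ` built from an ALDLf formula in
negation normal form (Definition 10). -/
noncomputable def deltaOf {AP : Type} : ALDLf AP → Set AP → PBF (ALDLf AP × Dir)
  | .atom p, s => if p ∈ s then .tru else .fls
  | .neg (.atom p), s => if p ∈ s then .fls else .tru
  | .neg _, _ => .fls
  | .conj a b, _ => .conj (.var (a, Dir.stay)) (.var (b, Dir.stay))
  | .disj a b, _ => .disj (.var (a, Dir.stay)) (.var (b, Dir.stay))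
  | .dia (.mk R T Δ r G) φ', s => diaTrans s R T Δ G φ' r
  | .box (.mk R T Δ r G) φ', s => boxTrans s R T Δ G φ' r

/-- The 2AFW `A_φ` obtained from an ALDLf formula `φ`: states are formulas,
the start state is `φ`, and the accepting states are the box formulas. -/
noncomputable def autOf {AP : Type} (φ : ALDLf AP) : TAFW (ALDLf AP) (Set AP) where
  delta := deltaOf
  start := φ
  acc := {ψ | ∃ U χ, ψ = ALDLf.box U χ}

/-!
By rule 5, a node of a run labelled `⟨U_r⟩φ'` is never a leaf (it is not `Accept`, and its
transition is never `true`), and each of its children is `φ'` or some `⟨U_{r'}⟩φ'`. If `φ'` never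
occurred, choosing such children from the root would give an infinite branch of diamond states,
none of them accepting, against the acceptance condition. If every state of the run were a diamond,
the same argument would apply to the invariant "is a diamond".
-/

theorem PBF.exists_mem_satBy_of_satBy_foldr_disj {X : Type} {S : Set X} {l : List (PBF X)}
    (h : (l.foldr PBF.disj PBF.fls).satBy S) : ∃ f ∈ l, f.satBy S := by
  induction l with
  | nil => exact h.elim
  | cons f l ih =>
    rcases h with h | h
    · exact ⟨f, List.mem_cons_self, h⟩
    · obtain ⟨g, hg, hgS⟩ := ih h
      exact ⟨g, List.mem_cons_of_mem f hg, hgS⟩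

theorem PBF.satBy_ite_disj {X : Type} {S : Set X} {c : Prop} [Decidable c] {f g : PBF X}
    (h : (if c then f.disj g else g).satBy S) : f.satBy S ∨ g.satBy S := by
  split_ifs at h
  exacts [h, Or.inr h]

theorem PBF.foldr_disj_ne_tru {X : Type} (l : List (PBF X)) :
    l.foldr PBF.disj PBF.fls ≠ PBF.tru := by
  cases l <;> simp

section DiamondTransitions

variable {AP : Type} (s : Set AP) (R : List ℕ) (T : List (PALabel AP))
  (Δ : List (ℕ × PALabel AP × ℕ)) (G : List ℕ) (φ' : ALDLf AP) (r : ℕ)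

theorem diaTrans_ne_tru : diaTrans s R T Δ G φ' r ≠ PBF.tru := by
  unfold diaTrans
  split_ifs
  · nofun
  · exact PBF.foldr_disj_ne_tru _

theorem diaTrans_satBy {S : Set (ALDLf AP × Dir)} (h : (diaTrans s R T Δ G φ' r).satBy S) :
    (φ', Dir.stay) ∈ S ∨ ∃ r' d, (ALDLf.dia (.mk R T Δ r' G) φ', d) ∈ S := by
  unfold diaTrans at h
  rcases PBF.satBy_ite_disj h with h | h
  · exact Or.inl h
  obtain ⟨f, hf, hfS⟩ := PBF.exists_mem_satBy_of_satBy_foldr_disj h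
  obtain ⟨⟨r₀, l, r'⟩, -, harm⟩ := List.mem_filterMap.mp hf
  refine Or.inr ⟨r', ?_⟩
  cases l <;> simp only at harm <;> split_ifs at harm <;> cases harm
  exacts [⟨_, hfS⟩, ⟨_, hfS⟩, ⟨_, hfS.2⟩]

end DiamondTransitions

section Runs

variable {M : TAFW Q A} {w : List A} {k : ℕ} {ρ : List ℕ → Option (Config Q)}

/-- Following the invariant from the root yields an infinite branch on which no accepting state
occurs. -/
theorem AcceptingRun.false_of_nonaccepting_invariant (hρ : AcceptingRun M w k ρ) (P : Q → Prop)
    (hP : ∀ q, P q → q ∉ M.acc) (hstart : P M.start)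
    (hstep : ∀ x q j, ρ x = some (.conf q j) → P q →
      ∃ n q' j', ρ (x ++ [n]) = some (.conf q' j') ∧ P q') : False := by
  let good : List ℕ → Prop := fun x => ∃ q j, ρ x = some (.conf q j) ∧ P q
  have hchild : ∀ x, good x → ∃ n, good (x ++ [n]) :=
    fun x ⟨q, j, hx, hq⟩ => hstep x q j hx hq
  choose! c hc using hchild
  let path : ℕ → List ℕ := fun n => Nat.rec [] (fun _ x => x ++ [c x]) n
  have path_eq : ∀ n, (List.range n).map (fun m => c (path m)) = path n := by
    intro n
    induction n with
    | zero => rfl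
    | succ n ih => rw [List.range_succ, List.map_append, ih]; rfl
  have path_good : ∀ n, good (path n) := by
    intro n
    induction n with
    | zero => exact ⟨M.start, k, hρ.1.root, hstart⟩
    | succ n ih => exact hc _ ih
  have branch : InfBranch ρ (fun m => c (path m)) := fun n => by
    obtain ⟨q, j, hx, -⟩ := path_good n
    rw [path_eq, hx]
    rfl
  obtain ⟨f, hf, hinf⟩ := hρ.2.2 _ branch
  obtain ⟨n, -, j, hn⟩ := hinf 0
  obtain ⟨q, j', hx, hq⟩ := path_good n
  rw [path_eq, hx] at hn
  cases hn
  exact hP f hq hf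

end Runs

theorem AcceptingRun.exists_child_of_dia {AP : Type} {φ : ALDLf AP} {π : List (Set AP)} {i : ℕ}
    {ρ : List ℕ → Option (Config (ALDLf AP))} (hρ : AcceptingRun (autOf φ) π i ρ) {x : List ℕ}
    {R : List ℕ} {T : List (PALabel AP)} {Δ : List (ℕ × PALabel AP × ℕ)} {G : List ℕ}
    {χ : ALDLf AP} {r k : ℕ} (hx : ρ x = some (.conf (.dia (.mk R T Δ r G) χ) k)) :
    ∃ n, ρ (x ++ [n]) = some (.conf χ k) ∨
      ∃ r' j, ρ (x ++ [n]) = some (.conf (.dia (.mk R T Δ r' G) χ) j) := by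
  obtain ⟨a, -, hfls | htru | ⟨-, -, S, hsat, hchild, -⟩⟩ := hρ.1.node x _ k hx
  · have hacc := hρ.2.1 x ⟨by simp [hx], hfls.2⟩
    simp [hx] at hacc
  · exact absurd htru.1 (diaTrans_ne_tru a R T Δ G χ r)
  · rcases diaTrans_satBy a R T Δ G χ r hsat with hS | ⟨r', _, hS⟩
    · obtain ⟨n, j, hj, hc⟩ := hchild _ hS
      cases hj
      exact ⟨n, Or.inl hc⟩
    · obtain ⟨n, j, -, hc⟩ := hchild _ hS
      exact ⟨n, Or.inr ⟨r', j, hc⟩⟩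

/-- every accepting run of `A_{⟨U⟩φ'}` on `π` from `i` contains
a node with configuration `(φ', j)` for some position `j`; in particular no
accepting run consists solely of diamond-state configurations. -/
theorem accepting_run_reaches_continuation {AP : Type} (U : PathAut AP)
    (φ' : ALDLf AP) (π : List (Set AP)) (hπ : π ≠ []) (i : ℕ) (hi : i < π.length)
    (ρ : List ℕ → Option (Config (ALDLf AP)))
    (hρ : AcceptingRun (autOf (ALDLf.dia U φ')) π i ρ) :
    (∃ x j, ρ x = some (Config.conf φ' j)) ∧
    ¬ ∀ x q k, ρ x = some (Config.conf q k) → ∃ U' χ, q = ALDLf.dia U' χ := by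
  obtain ⟨R, T, Δ, r, G⟩ := U
  have dia_not_acc : ∀ U χ, ALDLf.dia U χ ∉ (autOf (ALDLf.dia (.mk R T Δ r G) φ')).acc := by
    rintro U χ ⟨_, _, ⟨⟩⟩
  refine ⟨?_, fun hall => ?_⟩
  · by_contra! hno
    refine hρ.false_of_nonaccepting_invariant (fun q => ∃ r', q = .dia (.mk R T Δ r' G) φ')
      (by rintro _ ⟨r', rfl⟩; exact dia_not_acc _ _) ⟨r, rfl⟩ ?_
    rintro x _ j hx ⟨r', rfl⟩
    obtain ⟨n, hc | ⟨r'', j', hc⟩⟩ := hρ.exists_child_of_dia hx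
    · exact absurd hc (hno _ _)
    · exact ⟨n, _, j', hc, r'', rfl⟩
  · refine hρ.false_of_nonaccepting_invariant (fun q => ∃ U χ, q = .dia U χ)
      (by rintro _ ⟨U, χ, rfl⟩; exact dia_not_acc U χ) ⟨_, _, rfl⟩ ?_
    rintro x _ j hx ⟨⟨R', T', Δ', r', G'⟩, χ, rfl⟩
    -- under `hall` the continuation child of a diamond node is again a diamond node
    obtain ⟨n, hc | ⟨_, _, hc⟩⟩ := hρ.exists_child_of_dia hx <;>
      exact ⟨n, _, _, hc, hall _ _ _ hc⟩
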